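/- For ν > 0, the integral 2 ∫₀^∞ (y √(ν² y² + t) − ν y²) φ(y) dy equals √(2t/π) + ν (2 e^{t/(2ν²)} (1 − Φ(√t/ν)) − 1), where φ(y) = (1/√(2π)) e^{−y²/2} and Φ is the standard Gaussian CDF, for every t > 0. -/

import Mathlib

open MeasureTheory Real

/-- The standard Gaussian density. -/
noncomputable def stdGaussianPDF (y : ℝ) : ℝ :=
  (Real.sqrt (2 * Real.pi))⁻¹ * Real.exp (-y ^ 2 / 2)

/-- The standard Gaussian cumulative distribution function. -/
noncomputable def stdGaussianCDF (x : ℝ) : ℝ :=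
  ∫ y in Set.Iic x, stdGaussianPDF y

/-!
Put `a = t / ν²`; then `√(ν²y² + t) = ν √(y² + a)` and the integrand is `ν (y √(y² + a) − y²) φ(y)`.
This has the explicit primitive
`F(y) = (y − √(y² + a)) φ(y) − e^{a/2} (1 − Φ(√(y² + a))) − Φ(y)`,
the middle term being the substitution `z = √(y² + a)` made explicit through
`e^{a/2} φ(√(y² + a)) = φ(y)`. The integrand is nonnegative, so `∫₀^∞ = lim F − F(0) = −1 − F(0)`
needs no separate integrability argument, and `Φ(0) = 1/2` evaluates `F(0)`.
-/

open Filter Topology Set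

lemma sqrt_sq_mul {c : ℝ} (hc : 0 ≤ c) (x : ℝ) : √(c ^ 2 * x) = c * √x := by
  rw [sqrt_mul (sq_nonneg c), sqrt_sq hc]

lemma le_sqrt_sq_add {y a : ℝ} (ha : 0 ≤ a) : y ≤ √(y ^ 2 + a) :=
  (le_abs_self y).trans <| by
    rw [← sqrt_sq_eq_abs]; exact sqrt_le_sqrt (le_add_of_nonneg_right ha)

lemma sqrt_sq_add_le {y a : ℝ} (hy : 0 ≤ y) (ha : 0 ≤ a) : √(y ^ 2 + a) ≤ y + √a := by
  rw [sqrt_le_left (by positivity)]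
  nlinarith [sq_sqrt ha, sqrt_nonneg a]

lemma stdGaussianPDF_eq_gaussianPDFReal :
    stdGaussianPDF = ProbabilityTheory.gaussianPDFReal 0 1 := by
  ext y
  simp [stdGaussianPDF, ProbabilityTheory.gaussianPDFReal]

lemma stdGaussianPDF_nonneg (y : ℝ) : 0 ≤ stdGaussianPDF y := by
  unfold stdGaussianPDF; positivity

lemma continuous_stdGaussianPDF : Continuous stdGaussianPDF := by
  unfold stdGaussianPDF; fun_prop

lemma integrable_stdGaussianPDF : Integrable stdGaussianPDF := by
  rw [stdGaussianPDF_eq_gaussianPDFReal]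
  exact ProbabilityTheory.integrable_gaussianPDFReal 0 1

lemma integral_stdGaussianPDF : ∫ y, stdGaussianPDF y = 1 := by
  rw [stdGaussianPDF_eq_gaussianPDFReal]
  exact ProbabilityTheory.integral_gaussianPDFReal_eq_one 0 one_ne_zero

lemma stdGaussianPDF_zero : stdGaussianPDF 0 = (√(2 * π))⁻¹ := by
  simp [stdGaussianPDF]

lemma stdGaussianPDF_neg (y : ℝ) : stdGaussianPDF (-y) = stdGaussianPDF y := by
  rw [stdGaussianPDF, stdGaussianPDF, neg_sq]

lemma exp_mul_stdGaussianPDF_sqrt_sq_add {y a : ℝ} (h : 0 ≤ y ^ 2 + a) :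
    exp (a / 2) * stdGaussianPDF √(y ^ 2 + a) = stdGaussianPDF y := by
  rw [stdGaussianPDF, stdGaussianPDF, sq_sqrt h, mul_left_comm, ← exp_add]
  ring_nf

lemma hasDerivAt_stdGaussianPDF (y : ℝ) :
    HasDerivAt stdGaussianPDF (-y * stdGaussianPDF y) y := by
  have hexponent : HasDerivAt (fun x : ℝ => -x ^ 2 / 2) (-y) y :=
    ((hasDerivAt_pow 2 y).fun_neg.div_const 2).congr_deriv (by ring)
  refine (hexponent.exp.const_mul (√(2 * π))⁻¹).congr_deriv ?_
  unfold stdGaussianPDF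
  ring

lemma tendsto_stdGaussianPDF_atTop : Tendsto stdGaussianPDF atTop (𝓝 0) := by
  have h : Tendsto (fun y : ℝ => -y ^ 2 / 2) atTop atBot :=
    (tendsto_neg_atTop_atBot.comp (tendsto_pow_atTop two_ne_zero)).atBot_div_const two_pos
  have h' := (tendsto_exp_atBot.comp h).const_mul (√(2 * π))⁻¹
  rwa [mul_zero] at h'

lemma stdGaussianCDF_add_integral_Ioi (x : ℝ) :
    stdGaussianCDF x + ∫ y in Ioi x, stdGaussianPDF y = 1 := by
  rw [stdGaussianCDF, intervalIntegral.integral_Iic_add_Ioi integrable_stdGaussianPDF.integrableOn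
    integrable_stdGaussianPDF.integrableOn, integral_stdGaussianPDF]

lemma stdGaussianCDF_zero : stdGaussianCDF 0 = 1 / 2 := by
  have hsum := stdGaussianCDF_add_integral_Ioi 0
  have hsymm : stdGaussianCDF 0 = ∫ y in Ioi 0, stdGaussianPDF y := by
    simpa [stdGaussianCDF, stdGaussianPDF_neg] using integral_comp_neg_Iic 0 stdGaussianPDF
  linarith

lemma stdGaussianCDF_eq_add_intervalIntegral (x y : ℝ) :
    stdGaussianCDF y = stdGaussianCDF x + ∫ s in x..y, stdGaussianPDF s := by
  rw [← intervalIntegral.integral_Iic_sub_Iic integrable_stdGaussianPDF.integrableOn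
    integrable_stdGaussianPDF.integrableOn, stdGaussianCDF, stdGaussianCDF]
  ring

lemma hasDerivAt_stdGaussianCDF (x : ℝ) : HasDerivAt stdGaussianCDF (stdGaussianPDF x) x := by
  have h := (intervalIntegral.integral_hasDerivAt_right (a := 0) (b := x)
    integrable_stdGaussianPDF.intervalIntegrable
    (continuous_stdGaussianPDF.stronglyMeasurableAtFilter _ _)
    continuous_stdGaussianPDF.continuousAt).const_add (stdGaussianCDF 0)
  simpa [← stdGaussianCDF_eq_add_intervalIntegral] using h

lemma continuous_stdGaussianCDF : Continuous stdGaussianCDF :=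
  continuous_iff_continuousAt.2 fun x => (hasDerivAt_stdGaussianCDF x).continuousAt

lemma tendsto_stdGaussianCDF_atTop : Tendsto stdGaussianCDF atTop (𝓝 1) := by
  have h := (intervalIntegral_tendsto_integral_Ioi 0 integrable_stdGaussianPDF.integrableOn
    tendsto_id).const_add (stdGaussianCDF 0)
  rw [stdGaussianCDF_add_integral_Ioi] at h
  simpa [← stdGaussianCDF_eq_add_intervalIntegral] using h

section Antideriv

variable {a : ℝ}

noncomputable def sqrtGaussianAntideriv (a y : ℝ) : ℝ :=
  (y - √(y ^ 2 + a)) * stdGaussianPDF y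
    - exp (a / 2) * (1 - stdGaussianCDF √(y ^ 2 + a)) - stdGaussianCDF y

lemma continuous_sqrtGaussianAntideriv : Continuous (sqrtGaussianAntideriv a) := by
  unfold sqrtGaussianAntideriv
  have := continuous_stdGaussianPDF
  have := continuous_stdGaussianCDF
  fun_prop

lemma hasDerivAt_sqrt_sq_add {y : ℝ} (h : 0 < y ^ 2 + a) :
    HasDerivAt (fun x => √(x ^ 2 + a)) (y / √(y ^ 2 + a)) y :=
  (((hasDerivAt_pow 2 y).add_const a).sqrt h.ne').congr_deriv (by ring)

lemma hasDerivAt_sqrtGaussianAntideriv {y : ℝ} (h : 0 < y ^ 2 + a) :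
    HasDerivAt (sqrtGaussianAntideriv a)
      ((y * √(y ^ 2 + a) - y ^ 2) * stdGaussianPDF y) y := by
  have hw := hasDerivAt_sqrt_sq_add h
  have hd := ((((hasDerivAt_id y).sub hw).mul (hasDerivAt_stdGaussianPDF y)).sub
    (((hasDerivAt_stdGaussianCDF _).comp y hw).const_sub 1 |>.const_mul (exp (a / 2)))).sub
    (hasDerivAt_stdGaussianCDF y)
  refine hd.congr_deriv ?_
  have hw0 : √(y ^ 2 + a) ≠ 0 := (sqrt_pos.2 h).ne'
  have hpdf := exp_mul_stdGaussianPDF_sqrt_sq_add h.le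
  simp only [Pi.sub_apply, id]
  field_simp
  linear_combination y * hpdf

lemma tendsto_sqrtGaussianAntideriv_atTop (ha : 0 ≤ a) :
    Tendsto (sqrtGaussianAntideriv a) atTop (𝓝 (-1)) := by
  have hbounded : ∀ᶠ y in atTop, ‖y - √(y ^ 2 + a)‖ ≤ √a := by
    filter_upwards [eventually_ge_atTop 0] with y hy
    rw [Real.norm_eq_abs, abs_sub_comm, abs_of_nonneg (sub_nonneg.2 (le_sqrt_sq_add ha))]
    linarith [sqrt_sq_add_le hy ha]
  have hsqrt : Tendsto (fun y => √(y ^ 2 + a)) atTop atTop :=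
    tendsto_atTop_mono (fun _ => le_sqrt_sq_add ha) tendsto_id
  have h := ((isBoundedUnder_le_mul_tendsto_zero ⟨√a, hbounded⟩
    tendsto_stdGaussianPDF_atTop).sub ((tendsto_stdGaussianCDF_atTop.comp hsqrt).const_sub 1
      |>.const_mul (exp (a / 2)))).sub tendsto_stdGaussianCDF_atTop
  rwa [sub_self, mul_zero, sub_zero, zero_sub] at h

lemma sqrtGaussianAntideriv_zero :
    sqrtGaussianAntideriv a 0 =
      -√a * (√(2 * π))⁻¹ - exp (a / 2) * (1 - stdGaussianCDF √a) - 1 / 2 := by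
  simp [sqrtGaussianAntideriv, stdGaussianPDF_zero, stdGaussianCDF_zero]

end Antideriv

theorem two_mul_integral_Ioi_sqrt_sq_add_mul_stdGaussianPDF {a : ℝ} (ha : 0 ≤ a) :
    2 * ∫ y in Ioi 0, (y * √(y ^ 2 + a) - y ^ 2) * stdGaussianPDF y
      = √(2 * a / π) + 2 * exp (a / 2) * (1 - stdGaussianCDF √a) - 1 := by
  have hderiv : ∀ y ∈ Ioi (0 : ℝ), HasDerivAt (sqrtGaussianAntideriv a)
      ((y * √(y ^ 2 + a) - y ^ 2) * stdGaussianPDF y) y := fun y hy =>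
    hasDerivAt_sqrtGaussianAntideriv (by have : (0 : ℝ) < y := hy; positivity)
  have hnonneg : ∀ y ∈ Ioi (0 : ℝ), 0 ≤ (y * √(y ^ 2 + a) - y ^ 2) * stdGaussianPDF y :=
    fun y hy => mul_nonneg (by nlinarith [le_sqrt_sq_add (y := y) ha, mem_Ioi.1 hy])
      (stdGaussianPDF_nonneg y)
  have hsqrt : √(2 * a / π) = 2 * √a * (√(2 * π))⁻¹ := by
    rw [show 2 * a / π = 2 ^ 2 * (a / (2 * π)) by field_simp,
      sqrt_sq_mul zero_le_two, sqrt_div ha]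
    ring
  rw [integral_Ioi_of_hasDerivAt_of_nonneg continuous_sqrtGaussianAntideriv.continuousWithinAt
    hderiv hnonneg (tendsto_sqrtGaussianAntideriv_atTop ha), sqrtGaussianAntideriv_zero, hsqrt]
  ring

theorem gaussian_integral_identity (ν t : ℝ) (hν : 0 < ν) (ht : 0 < t) :
    2 * ∫ y in Set.Ioi (0:ℝ),
        (y * Real.sqrt (ν ^ 2 * y ^ 2 + t) - ν * y ^ 2) * stdGaussianPDF y
      = Real.sqrt (2 * t / Real.pi)
        + ν * (2 * Real.exp (t / (2 * ν ^ 2)) * (1 - stdGaussianCDF (Real.sqrt t / ν)) - 1) := by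
  have hscale : ∀ y, √(ν ^ 2 * y ^ 2 + t) = ν * √(y ^ 2 + t / ν ^ 2) := fun y => by
    rw [← sqrt_sq_mul hν.le]
    field_simp
  have hintegrand : ∀ y, (y * √(ν ^ 2 * y ^ 2 + t) - ν * y ^ 2) * stdGaussianPDF y
      = ν * ((y * √(y ^ 2 + t / ν ^ 2) - y ^ 2) * stdGaussianPDF y) := fun y => by
    rw [hscale]; ring
  simp_rw [hintegrand, integral_const_mul]
  have hsqrt : √(2 * t / π) = ν * √(2 * (t / ν ^ 2) / π) := by
    rw [← sqrt_sq_mul hν.le]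
    field_simp
  have hroot : √t / ν = √(t / ν ^ 2) := by rw [sqrt_div ht.le, sqrt_sq hν.le]
  rw [hsqrt, hroot, show t / (2 * ν ^ 2) = t / ν ^ 2 / 2 by ring]
  linear_combination
    ν * two_mul_integral_Ioi_sqrt_sq_add_mul_stdGaussianPDF (a := t / ν ^ 2) (by positivity)
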